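/- arXiv:1412.0728 — 2 statements merged into one kernel-verified Lean document; each statement's English description precedes it below -/
import Mathlib

section
/- Let v = (v_1, ..., v_m) be a proper sequence in R^2 with slack entries S_i^j = Δ(v_i, v_j, v_{j+1}). If indices p, q, r, t satisfy q > p > r > t, then S_t^p · S_q^r > S_q^p · S_t^r. -/
open EuclideanGeometry Real Finset

noncomputable section

/-- Points of the plane. -/
abbrev Pt : Type := EuclideanSpace ℝ (Fin 2)

/-- `Δ(a,b,c)`: the oriented area of the parallelepiped spanned by `a - b` and `c - b`. -/
def tdet (a b c : Pt) : ℝ :=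
  (a 0 - b 0) * (c 1 - b 1) - (a 1 - b 1) * (c 0 - b 0)

/-- `β(a,b,c) = π - ∠(a,b,c)`, where `∠` is the unsigned angle at `b`. -/
def beta (a b c : Pt) : ℝ := Real.pi - EuclideanGeometry.angle a b c

/-- Cyclic successor on `{1, …, n}`. -/
def cyc (n j : ℕ) : ℕ := if j = n then 1 else j + 1

/-- Cyclic predecessor on `{1, …, n}`. -/
def cycPred (n j : ℕ) : ℕ := if j = 1 then n else j - 1

/-- `(v 1, …, v n)` is a proper sequence: `Δ(v₁,v₂,v₃) > 0` and every segment
`conv{v_j, v_{j+1}}` (indices cyclic) is an edge of the convex hull of the points,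
i.e. it is the set of maximizers of some linear functional over the points. -/
def Proper (n : ℕ) (v : ℕ → Pt) : Prop :=
  0 < tdet (v 1) (v 2) (v 3) ∧
  ∀ j, 1 ≤ j → j ≤ n →
    ∃ (ℓ : Pt →ₗ[ℝ] ℝ) (c : ℝ), ℓ (v j) = c ∧ ℓ (v (cyc n j)) = c ∧
      ∀ k, 1 ≤ k → k ≤ n → k ≠ j → k ≠ cyc n j → ℓ (v k) < c

/-- `(v 1, …, v n)` is `θ`-thin. -/
def Thin (n : ℕ) (v : ℕ → Pt) (θ : ℝ) : Prop :=
  ∑ k ∈ Finset.Icc 2 (n - 1), beta (v (k - 1)) (v k) (v (k + 1)) ≤ θ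

/-- The edge sequence of `(v 1, …, v n)` is `h`-decreasing. -/
def EdgeDecr (n : ℕ) (v : ℕ → Pt) (h : ℝ) : Prop :=
  ∀ k, 1 ≤ k → k + 2 ≤ n → h * dist (v (k + 1)) (v (k + 2)) ≤ dist (v k) (v (k + 1))

/-!
The six points `v t, v r, v (r+1), v p, v (p+1), v q` of a proper sequence are in convex position
in this cyclic order, so every `Δ` of three of them taken in increasing order is positive (or zero
when two coincide). Multiplying the target difference `S_t^p S_q^r - S_q^p S_t^r` by the positive
factor `Δ(v_t,v_r,v_p) Δ(v_r,v_p,v_q)` and expanding with two three-term Plücker relations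
writes it as a sum of products of such `Δ`s, one of which is strictly positive.
-/

lemma tdet_rotate (a b c : Pt) : tdet a b c = tdet c a b := by
  unfold tdet; ring

lemma tdet_self_left (a b : Pt) : tdet a b a = 0 := by
  unfold tdet; ring

lemma tdet_self_right (a b : Pt) : tdet a b b = 0 := by
  unfold tdet; ring

lemma cyc_of_lt {n j : ℕ} (h : j < n) : cyc n j = j + 1 := by
  simp [cyc, h.ne]

lemma linearMap_pt_apply (ℓ : Pt →ₗ[ℝ] ℝ) (x : Pt) :
    ℓ x = x 0 * ℓ (EuclideanSpace.single 0 1) + x 1 * ℓ (EuclideanSpace.single 1 1) := by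
  have hx : x = x 0 • EuclideanSpace.single (0 : Fin 2) (1 : ℝ) + x 1 • EuclideanSpace.single 1 1 := by
    ext i; fin_cases i <;> simp
  conv_lhs => rw [hx]
  simp only [map_add, map_smul, smul_eq_mul]

lemma tdet_pos_of_same_side (ℓ : Pt →ₗ[ℝ] ℝ) {x y z w : Pt} (hyz : ℓ z = ℓ y)
    (hx : ℓ x < ℓ y) (hw : ℓ w < ℓ y) (hw' : 0 < tdet w y z) : 0 < tdet x y z := by
  set a := ℓ (EuclideanSpace.single 0 1)
  set b := ℓ (EuclideanSpace.single 1 1)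
  have hline : a * (z 0 - y 0) + b * (z 1 - y 1) = 0 := by
    rw [linearMap_pt_apply ℓ z, linearMap_pt_apply ℓ y] at hyz
    linear_combination hyz
  -- `ℓ - ℓ y` and `tdet · y z` are affine functions vanishing on the same line, hence proportional
  have hprop : ∀ u : Pt, (ℓ u - ℓ y) * ((z 0 - y 0) ^ 2 + (z 1 - y 1) ^ 2) =
      (a * (z 1 - y 1) - b * (z 0 - y 0)) * tdet u y z := by
    intro u
    rw [linearMap_pt_apply ℓ u, linearMap_pt_apply ℓ y]
    unfold tdet
    linear_combination ((u 0 - y 0) * (z 0 - y 0) + (u 1 - y 1) * (z 1 - y 1)) * hline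
  have hyz_ne : z 0 - y 0 ≠ 0 ∨ z 1 - y 1 ≠ 0 := by
    by_contra! h
    simp only [tdet, h.1, h.2, mul_zero, sub_zero, lt_irrefl] at hw'
  have hnorm : 0 < (z 0 - y 0) ^ 2 + (z 1 - y 1) ^ 2 := by
    rcases hyz_ne with h | h <;> positivity
  have hw_neg := hprop w ▸ mul_neg_of_neg_of_pos (sub_neg.2 hw) hnorm
  have hx_neg := hprop x ▸ mul_neg_of_neg_of_pos (sub_neg.2 hx) hnorm
  have hcoef : a * (z 1 - y 1) - b * (z 0 - y 0) < 0 := by nlinarith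
  nlinarith

namespace Proper

variable {m : ℕ} {v : ℕ → Pt}

lemma exists_edge_functional (hv : Proper m v) {j : ℕ} (hj : 1 ≤ j) (hjm : j < m) :
    ∃ ℓ : Pt →ₗ[ℝ] ℝ, ℓ (v (j + 1)) = ℓ (v j) ∧
      ∀ k, 1 ≤ k → k ≤ m → k ≠ j → k ≠ j + 1 → ℓ (v k) < ℓ (v j) := by
  obtain ⟨ℓ, c, hj, hj', hlt⟩ := hv.2 j hj hjm.le
  rw [cyc_of_lt hjm] at hj' hlt
  exact ⟨ℓ, hj'.trans hj.symm, fun k hk hkm hkj hkj' => hj ▸ hlt k hk hkm hkj hkj'⟩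

lemma tdet_edge_pos (hv : Proper m v) {j k : ℕ} (hj : 1 ≤ j) (hjm : j < m) (hk : 1 ≤ k)
    (hkm : k ≤ m) (hkj : k ≠ j) (hkj' : k ≠ j + 1) : 0 < tdet (v k) (v j) (v (j + 1)) := by
  induction j, hj using Nat.le_induction generalizing k with
  | base =>
    obtain ⟨ℓ, hℓ, hlt⟩ := hv.exists_edge_functional le_rfl hjm
    refine tdet_pos_of_same_side ℓ hℓ (hlt k hk hkm hkj hkj')
      (hlt 3 (by omega) (by omega) (by omega) (by omega)) ?_
    rw [← tdet_rotate]
    exact hv.1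
  | succ j hj ih =>
    obtain ⟨ℓ, hℓ, hlt⟩ := hv.exists_edge_functional (by omega) hjm
    refine tdet_pos_of_same_side ℓ hℓ (hlt k hk hkm hkj hkj')
      (hlt j hj (by omega) (by omega) (by omega)) ?_
    rw [tdet_rotate]
    exact ih (by omega) (by omega) (by omega) (by omega) (by omega)

lemma tdet_pos (hv : Proper m v) {i j k : ℕ} (hi : 1 ≤ i) (hij : i < j) (hjk : j < k)
    (hkm : k ≤ m) : 0 < tdet (v i) (v j) (v k) := by
  induction k, hjk using Nat.le_induction with
  | base => exact hv.tdet_edge_pos (by omega) (by omega) hi (by omega) (by omega) (by omega)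
  | succ n hn ih =>
    have hin : 0 < tdet (v n) (v i) (v (i + 1)) :=
      hv.tdet_edge_pos hi (by omega) (by omega) (by omega) (by omega) (by omega)
    have hin' : 0 < tdet (v (n + 1)) (v i) (v (i + 1)) :=
      hv.tdet_edge_pos hi (by omega) (by omega) hkm (by omega) (by omega)
    have hni : 0 < tdet (v i) (v n) (v (n + 1)) :=
      hv.tdet_edge_pos (by omega) (by omega) hi (by omega) (by omega) (by omega)
    have hji : 0 ≤ tdet (v j) (v i) (v (i + 1)) := by
      rcases (show i + 1 ≤ j by omega).eq_or_lt with rfl | hlt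
      · rw [tdet_self_left]
      · exact (hv.tdet_edge_pos hi (by omega) (by omega) (by omega) (by omega) (by omega)).le
    have plucker : tdet (v i) (v j) (v (n + 1)) * tdet (v n) (v i) (v (i + 1)) =
        tdet (v i) (v n) (v (n + 1)) * tdet (v j) (v i) (v (i + 1)) +
          tdet (v i) (v j) (v n) * tdet (v (n + 1)) (v i) (v (i + 1)) := by
      unfold tdet; ring
    have hrhs := add_pos_of_nonneg_of_pos (mul_nonneg hni.le hji) (mul_pos (ih (by omega)) hin')
    exact pos_of_mul_pos_left (plucker ▸ hrhs) hin.le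

lemma tdet_nonneg (hv : Proper m v) {i j k : ℕ} (hi : 1 ≤ i) (hij : i < j) (hjk : j ≤ k)
    (hkm : k ≤ m) : 0 ≤ tdet (v i) (v j) (v k) := by
  rcases hjk.eq_or_lt with rfl | hjk
  · rw [tdet_self_right]
  · exact (hv.tdet_pos hi hij hjk hkm).le

end Proper

/-- The hypotheses hold for `A, …, F` in convex position in this cyclic order, also when `C = D`
or `E = F`. -/
lemma tdet_mul_tdet_lt_tdet_mul_tdet {A B C D E F : Pt} (hABC : 0 < tdet A B C)
    (hABD : 0 < tdet A B D) (hABF : 0 ≤ tdet A B F) (hADF : 0 < tdet A D F)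
    (hBCD : 0 ≤ tdet B C D) (hBDE : 0 < tdet B D E) (hBDF : 0 < tdet B D F)
    (hDEF : 0 ≤ tdet D E F) :
    tdet F D E * tdet A B C < tdet A D E * tdet F B C := by
  -- the product of the Plücker relations `[ADE][BDF] = [ABD][DEF] + [BDE][ADF]`
  -- and `[ABD][BCF] = [ABC][BDF] + [ABF][BCD]`
  have key : (tdet A D E * tdet F B C - tdet F D E * tdet A B C) * (tdet A B D * tdet B D F) =
      tdet A B D * tdet D E F * tdet A B F * tdet B C D +
        tdet B D E * tdet A D F * (tdet A B C * tdet B D F + tdet A B F * tdet B C D) := by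
    unfold tdet; ring
  have hpos : 0 < tdet A B D * tdet D E F * tdet A B F * tdet B C D +
      tdet B D E * tdet A D F * (tdet A B C * tdet B D F + tdet A B F * tdet B C D) := by
    have := mul_nonneg (mul_nonneg (mul_nonneg hABD.le hDEF) hABF) hBCD
    have := mul_pos (mul_pos hBDE hADF)
      (add_pos_of_pos_of_nonneg (mul_pos hABC hBDF) (mul_nonneg hABF hBCD))
    linarith
  have := pos_of_mul_pos_left (key ▸ hpos) (mul_pos hABD hBDF).le
  linarith

theorem stmt7_general (m : ℕ) (v : ℕ → Pt) (hv : Proper m v)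
    (p q r t : ℕ) (ht : 1 ≤ t) (htr : t < r) (hrp : r < p) (hpq : p < q)
    (hqm : q ≤ m) :
    tdet (v q) (v p) (v (cyc m p)) * tdet (v t) (v r) (v (cyc m r)) <
      tdet (v t) (v p) (v (cyc m p)) * tdet (v q) (v r) (v (cyc m r)) := by
  rw [cyc_of_lt (by omega : p < m), cyc_of_lt (by omega : r < m)]
  exact tdet_mul_tdet_lt_tdet_mul_tdet
    (hv.tdet_pos ht htr (by omega) (by omega)) (hv.tdet_pos ht htr hrp (by omega))
    (hv.tdet_pos ht htr (by omega) hqm).le (hv.tdet_pos ht (by omega) hpq hqm)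
    (hv.tdet_nonneg (by omega) (by omega) hrp (by omega))
    (hv.tdet_pos (by omega) hrp (by omega) (by omega)) (hv.tdet_pos (by omega) hrp hpq hqm)
    (hv.tdet_nonneg (by omega) (by omega) hpq hqm)

/-- For the slack matrix `S_i^j = Δ(v_i, v_j, v_{j+1})` of a proper sequence,
if `q > p > r > t` then `S_t^p · S_q^r > S_q^p · S_t^r`. -/
theorem stmt7 (m : ℕ) (hm : 3 ≤ m) (v : ℕ → Pt) (hv : Proper m v)
    (p q r t : ℕ) (ht : 1 ≤ t) (htr : t < r) (hrp : r < p) (hpq : p < q)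
    (hqm : q ≤ m) :
    tdet (v q) (v p) (v (cyc m p)) * tdet (v t) (v r) (v (cyc m r)) <
      tdet (v t) (v p) (v (cyc m p)) * tdet (v q) (v r) (v (cyc m r)) :=
  stmt7_general m v hv p q r t ht htr hrp hpq hqm
end
end

section
/- Let θ < 0.5 and h > 4, and let (v_1, ..., v_n) be a proper θ-thin sequence in R^2 whose edge sequence is h-decreasing. Writing β_k = β(v_{k-1}, v_k, v_{k+1}) and γ_k = d(v_k, v_{k+1})·β_k, one has (sin θ / θ)^n · Σ_{k=2}^{n-1} γ_k ≤ β(v_1, v_2, v_n)·d(v_2, v_n) ≤ (h/(h−1))^n · Σ_{k=2}^{n-1} γ_k. -/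
/-!
Write `e_k = v (k + 1) - v k`, `d_k = ‖e_k‖` and `A_k = β_2 + ⋯ + β_k ≤ θ`. Properness makes the
path turn clockwise at every vertex, so in the frame of `e_1` the edge `e_k` has polar angle
`-A_k`, and the chord `v n - v 2 = ∑_{k ≥ 2} e_k`, which makes the angle `β(v₁, v₂, v_n)` with
`e_1`, has coordinates `(∑ d_k cos A_k, ∑ d_k sin A_k)`. The lower bound follows from
`sin A_k ≥ sin β_k ≥ (sin θ / θ) β_k`. For the upper bound, `(p, q) ↦ ρ α` (polar radius times
polar angle) is convex and positively homogeneous on the right half-plane, so for the chord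
`β(v₁, v₂, v_n) · d(v₂, v_n) ≤ ∑ d_k A_k = ∑_j β_j ∑_{k ≥ j} d_k`, and the inner sums are at most
`h / (h - 1) · d_j` because the edge lengths decay geometrically.
-/

open EuclideanGeometry Real Finset

noncomputable section

lemma sin_div_mul_le_sin {x y : ℝ} (hx : 0 ≤ x) (hxy : x ≤ y) (hy : y ≤ π) :
    sin y / y * x ≤ sin x := by
  rcases (hx.trans hxy).eq_or_lt with rfl | hy0
  · simp [le_antisymm hxy hx]
  · have h := strictConcaveOn_sin_Icc.concaveOn.2 (Set.left_mem_Icc.2 pi_nonneg) ⟨hy0.le, hy⟩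
      (sub_nonneg.2 (div_le_one_of_le₀ hxy hy0.le)) (div_nonneg hx hy0.le)
      (sub_add_cancel 1 (x / y))
    simp only [smul_eq_mul, mul_zero, sin_zero, zero_add, div_mul_cancel₀ x hy0.ne'] at h
    calc sin y / y * x = x / y * sin y := by ring
      _ ≤ sin x := h

/-- For `p > 0` this is `ρ α`, where `(ρ, α)` are the polar coordinates of `(p, q)`. -/
def arcLength (p q : ℝ) : ℝ := √(p ^ 2 + q ^ 2) * arctan (q / p)

lemma arcLength_mul_cos_mul_sin {r a : ℝ} (hr : 0 < r) (ha₁ : -(π / 2) < a) (ha₂ : a < π / 2) :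
    arcLength (r * cos a) (r * sin a) = r * a := by
  rw [arcLength, mul_div_mul_left _ _ hr.ne', ← tan_eq_sin_div_cos, arctan_tan ha₁ ha₂,
    show (r * cos a) ^ 2 + (r * sin a) ^ 2 = r ^ 2 by
      linear_combination r ^ 2 * sin_sq_add_cos_sq a,
    sqrt_sq hr.le]

lemma arcLength_eq_mul_arcLength_one {p : ℝ} (q : ℝ) (hp : 0 < p) :
    arcLength p q = p * arcLength 1 (q / p) := by
  rw [arcLength, arcLength, one_pow, div_one, ← mul_assoc,
    show p ^ 2 + q ^ 2 = p ^ 2 * (1 + (q / p) ^ 2) by field_simp, sqrt_mul (sq_nonneg p),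
    sqrt_sq hp.le]

lemma monotoneOn_mul_sin_add_cos : MonotoneOn (fun a ↦ a * sin a + cos a) (Set.Icc 0 (π / 2)) := by
  have hderiv (a : ℝ) : HasDerivAt (fun a ↦ a * sin a + cos a) (a * cos a) a :=
    (((hasDerivAt_id' a).fun_mul (hasDerivAt_sin a)).fun_add (hasDerivAt_cos a)).congr_deriv
      (by ring)
  refine monotoneOn_of_deriv_nonneg (convex_Icc _ _) (by fun_prop)
    (fun a _ ↦ (hderiv a).differentiableAt.differentiableWithinAt) fun a ha ↦ ?_
  rw [interior_Icc] at ha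
  rw [(hderiv a).deriv]
  exact mul_nonneg ha.1.le (cos_nonneg_of_mem_Icc ⟨by linarith [ha.1, pi_pos], ha.2.le⟩)

lemma hasDerivAt_arcLength_one (t : ℝ) :
    HasDerivAt (arcLength 1) (arctan t * sin (arctan t) + cos (arctan t)) t := by
  have hpos : 0 < 1 + t ^ 2 := by positivity
  have hsqrt : HasDerivAt (fun t ↦ √(1 + t ^ 2)) (t / √(1 + t ^ 2)) t := by
    convert ((hasDerivAt_pow 2 t).const_add 1).sqrt hpos.ne' using 1
    field_simp
    push_cast
    ring
  have hf : arcLength 1 = fun t ↦ √(1 + t ^ 2) * arctan t := by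
    ext s
    simp [arcLength]
  rw [hf]
  refine (hsqrt.mul (hasDerivAt_arctan t)).congr_deriv ?_
  rw [sin_arctan, cos_arctan]
  have hs : 0 < √(1 + t ^ 2) := sqrt_pos.2 hpos
  field_simp
  rw [sq_sqrt hpos.le]
  ring

lemma convexOn_arcLength_one : ConvexOn ℝ (Set.Ici 0) (arcLength 1) := by
  refine MonotoneOn.convexOn_of_deriv (convex_Ici 0)
    (fun t _ ↦ (hasDerivAt_arcLength_one t).continuousAt.continuousWithinAt)
    (fun t _ ↦ (hasDerivAt_arcLength_one t).differentiableAt.differentiableWithinAt) ?_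
  intro x hx y hy hxy
  rw [interior_Ici] at hx hy
  rw [(hasDerivAt_arcLength_one x).deriv, (hasDerivAt_arcLength_one y).deriv]
  exact monotoneOn_mul_sin_add_cos ⟨arctan_nonneg.2 (le_of_lt hx), (arctan_lt_pi_div_two x).le⟩
    ⟨arctan_nonneg.2 (le_of_lt hy), (arctan_lt_pi_div_two y).le⟩ (arctan_strictMono.monotone hxy)

/-- `arcLength` is the perspective of the convex function `arcLength 1`, hence subadditive. -/
lemma arcLength_add_le {p₁ q₁ p₂ q₂ : ℝ} (hp₁ : 0 < p₁) (hp₂ : 0 < p₂) (hq₁ : 0 ≤ q₁)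
    (hq₂ : 0 ≤ q₂) :
    arcLength (p₁ + p₂) (q₁ + q₂) ≤ arcLength p₁ q₁ + arcLength p₂ q₂ := by
  have hp : 0 < p₁ + p₂ := add_pos hp₁ hp₂
  have hconv := convexOn_arcLength_one.2 (Set.mem_Ici.2 (div_nonneg hq₁ hp₁.le))
    (Set.mem_Ici.2 (div_nonneg hq₂ hp₂.le)) (div_nonneg hp₁.le hp.le) (div_nonneg hp₂.le hp.le)
    (by field_simp)
  rw [smul_eq_mul, smul_eq_mul, smul_eq_mul, smul_eq_mul,
    show p₁ / (p₁ + p₂) * (q₁ / p₁) + p₂ / (p₁ + p₂) * (q₂ / p₂) = (q₁ + q₂) / (p₁ + p₂) by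
      field_simp] at hconv
  rw [arcLength_eq_mul_arcLength_one _ hp, arcLength_eq_mul_arcLength_one _ hp₁,
    arcLength_eq_mul_arcLength_one _ hp₂]
  calc (p₁ + p₂) * arcLength 1 ((q₁ + q₂) / (p₁ + p₂))
      ≤ (p₁ + p₂) * (p₁ / (p₁ + p₂) * arcLength 1 (q₁ / p₁) +
          p₂ / (p₁ + p₂) * arcLength 1 (q₂ / p₂)) := mul_le_mul_of_nonneg_left hconv hp.le
    _ = _ := by field_simp

lemma arcLength_sum_le {ι : Type*} {s : Finset ι} (hs : s.Nonempty) {p q : ι → ℝ}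
    (hp : ∀ i ∈ s, 0 < p i) (hq : ∀ i ∈ s, 0 ≤ q i) :
    arcLength (∑ i ∈ s, p i) (∑ i ∈ s, q i) ≤ ∑ i ∈ s, arcLength (p i) (q i) := by
  induction hs using Finset.Nonempty.cons_induction with
  | singleton a => simp
  | cons a s ha hs ih =>
    simp only [Finset.forall_mem_cons] at hp hq
    rw [sum_cons, sum_cons, sum_cons]
    exact (arcLength_add_le hp.1 (sum_pos hp.2 hs) hq.1 (sum_nonneg hq.2)).trans
      (add_le_add le_rfl (ih hp.2 hq.2))

lemma sum_range_le_of_mul_le {f : ℕ → ℝ} {h : ℝ} {N : ℕ} (hh : 1 < h) (hf : 0 ≤ f N)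
    (hdec : ∀ i < N, h * f (i + 1) ≤ f i) :
    ∑ i ∈ range (N + 1), f i ≤ h / (h - 1) * f 0 := by
  have hshift : h * ∑ i ∈ range N, f (i + 1) ≤ ∑ i ∈ range N, f i := by
    rw [mul_sum]
    exact sum_le_sum fun i hi ↦ hdec i (mem_range.1 hi)
  have hsucc := sum_range_succ f N
  have hsucc' := sum_range_succ' f N
  rw [div_mul_eq_mul_div, le_div_iff₀ (by linarith)]
  nlinarith

lemma sum_Icc_le_of_mul_le {r : ℕ → ℝ} {h : ℝ} {a m : ℕ} (hh : 1 < h) (ham : a ≤ m)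
    (hr : 0 ≤ r m) (hdec : ∀ k, a ≤ k → k < m → h * r (k + 1) ≤ r k) :
    ∑ k ∈ Icc a m, r k ≤ h / (h - 1) * r a := by
  have hIcc : ∑ k ∈ Icc a m, r k = ∑ i ∈ range (m - a + 1), r (a + i) := by
    rw [← Ico_add_one_right_eq_Icc, sum_Ico_eq_sum_range, Nat.sub_add_comm ham]
  rw [hIcc]
  simpa using sum_range_le_of_mul_le (f := fun i ↦ r (a + i)) hh
    (by rwa [Nat.add_sub_cancel' ham]) fun i hi ↦ hdec (a + i) (by omega) (by omega)

lemma sum_mul_sum_Icc_le {r b : ℕ → ℝ} {h : ℝ} {a m : ℕ} (hh : 1 < h) (hb : ∀ k, 0 ≤ b k)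
    (hr : 0 ≤ r m) (hdec : ∀ k, a ≤ k → k < m → h * r (k + 1) ≤ r k) :
    ∑ k ∈ Icc a m, r k * ∑ j ∈ Icc a k, b j ≤ h / (h - 1) * ∑ k ∈ Icc a m, r k * b k := by
  have hswap : ∑ k ∈ Icc a m, r k * ∑ j ∈ Icc a k, b j =
      ∑ j ∈ Icc a m, b j * ∑ k ∈ Icc j m, r k := by
    simp_rw [mul_sum]
    rw [sum_comm' (t' := Icc a m) (s' := fun j ↦ Icc j m) fun k j ↦ by simp only [mem_Icc]; omega]
    simp_rw [mul_comm]
  rw [hswap, mul_sum]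
  refine sum_le_sum fun j hj ↦ ?_
  have hj := mem_Icc.1 hj
  calc b j * ∑ k ∈ Icc j m, r k ≤ b j * (h / (h - 1) * r j) :=
        mul_le_mul_of_nonneg_left
          (sum_Icc_le_of_mul_le hh hj.2 hr fun k hk hkm ↦ hdec k (hj.1.trans hk) hkm) (hb j)
    _ = h / (h - 1) * (r j * b j) := by ring

/-- `cr u w < 0` means that `w` points clockwise from `u`. -/
def cr (u w : Pt) : ℝ := u 0 * w 1 - u 1 * w 0

lemma inner_eq_coords (u w : Pt) : inner ℝ u w = u 0 * w 0 + u 1 * w 1 := by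
  simp [PiLp.inner_apply, Fin.sum_univ_two, mul_comm]

lemma cr_zero_left (w : Pt) : cr 0 w = 0 := by
  simp [cr]

lemma cr_zero_right (u : Pt) : cr u 0 = 0 := by
  simp [cr]

lemma cr_sum_right {ι : Type*} (u : Pt) (s : Finset ι) (w : ι → Pt) :
    cr u (∑ i ∈ s, w i) = ∑ i ∈ s, cr u (w i) := by
  simp only [cr, WithLp.ofLp_sum, Finset.sum_apply, mul_sum, sum_sub_distrib]

lemma abs_cr_eq_sin_angle_mul (u w : Pt) :
    |cr u w| = sin (InnerProductGeometry.angle u w) * (‖u‖ * ‖w‖) := by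
  rw [InnerProductGeometry.sin_angle_mul_norm_mul_norm, inner_eq_coords, inner_eq_coords,
    inner_eq_coords, ← sqrt_sq_eq_abs]
  congr 1
  simp only [cr]
  ring

lemma cr_neg_of_same_side {e y z : Pt} (ℓ : Pt →ₗ[ℝ] ℝ) (he : ℓ e = 0) (hy : ℓ y < 0)
    (hz : ℓ z < 0) (hcy : cr e y < 0) : cr e z < 0 := by
  have hcoords (x : Pt) :
      ℓ x = x 0 * ℓ (EuclideanSpace.single 0 1) + x 1 * ℓ (EuclideanSpace.single 1 1) := by
    conv_lhs => rw [show x = x 0 • EuclideanSpace.single 0 1 + x 1 • EuclideanSpace.single 1 1 by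
      ext i; fin_cases i <;> simp]
    simp
  set a := ℓ (EuclideanSpace.single 0 1)
  set b := ℓ (EuclideanSpace.single 1 1)
  have he0 : 0 < e 0 ^ 2 + e 1 ^ 2 := by
    by_contra! h
    have h0 : e 0 = 0 := by nlinarith [sq_nonneg (e 0), sq_nonneg (e 1)]
    have h1 : e 1 = 0 := by nlinarith [sq_nonneg (e 0), sq_nonneg (e 1)]
    simp [cr, h0, h1] at hcy
  -- in the plane, a functional vanishing on `e` is a multiple of `cr e`
  have hmul (x : Pt) : ℓ x * (e 0 ^ 2 + e 1 ^ 2) = (e 0 * b - e 1 * a) * cr e x := by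
    rw [hcoords] at he ⊢
    rw [cr]
    linear_combination (x 0 * e 0 + x 1 * e 1) * he
  have hy' := hmul y
  have hz' := hmul z
  nlinarith [mul_neg_of_neg_of_pos hy he0, mul_neg_of_neg_of_pos hz he0]

def HasPolarAngle (u : Pt) (φ : ℝ) : Prop := u 0 = ‖u‖ * cos φ ∧ u 1 = ‖u‖ * sin φ

lemma exists_hasPolarAngle (u : Pt) : ∃ φ, HasPolarAngle u φ := by
  set z : ℂ := ⟨u 0, u 1⟩
  have hz : ‖z‖ = ‖u‖ := by
    rw [Complex.norm_eq_sqrt_sq_add_sq, EuclideanSpace.norm_eq, Fin.sum_univ_two]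
    simp [z]
  exact ⟨z.arg, by rw [← hz, Complex.norm_mul_cos_arg], by rw [← hz, Complex.norm_mul_sin_arg]⟩

lemma HasPolarAngle.inner_eq {u w : Pt} {φ a : ℝ} (hu : HasPolarAngle u φ)
    (hw : HasPolarAngle w (φ - a)) : inner ℝ u w = ‖u‖ * (‖w‖ * cos a) := by
  rw [inner_eq_coords, hu.1, hu.2, hw.1, hw.2, cos_sub, sin_sub]
  linear_combination ‖u‖ * ‖w‖ * cos a * sin_sq_add_cos_sq φ

lemma HasPolarAngle.cr_eq {u w : Pt} {φ a : ℝ} (hu : HasPolarAngle u φ)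
    (hw : HasPolarAngle w (φ - a)) : cr u w = -(‖u‖ * (‖w‖ * sin a)) := by
  rw [cr, hu.1, hu.2, hw.1, hw.2, cos_sub, sin_sub]
  linear_combination -(‖u‖ * ‖w‖ * sin a) * sin_sq_add_cos_sq φ

lemma HasPolarAngle.sub_angle {u w : Pt} {φ : ℝ} (hu : HasPolarAngle u φ) (hu0 : u ≠ 0)
    (hc : cr u w ≤ 0) : HasPolarAngle w (φ - InnerProductGeometry.angle u w) := by
  set β := InnerProductGeometry.angle u w
  have hnu : 0 < ‖u‖ := norm_pos_iff.2 hu0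
  have hcos : u 0 * w 0 + u 1 * w 1 = ‖u‖ * (‖w‖ * cos β) := by
    rw [← inner_eq_coords, ← InnerProductGeometry.cos_angle_mul_norm_mul_norm]; ring
  have hsin : cr u w = -(‖u‖ * (‖w‖ * sin β)) := by
    have h := abs_cr_eq_sin_angle_mul u w
    rw [abs_of_nonpos hc] at h
    linear_combination -h
  rw [hu.1, hu.2] at hcos
  rw [cr, hu.1, hu.2] at hsin
  constructor
  · refine mul_left_cancel₀ hnu.ne' ?_
    rw [cos_sub]
    linear_combination cos φ * hcos - sin φ * hsin - ‖u‖ * w 0 * sin_sq_add_cos_sq φ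
  · refine mul_left_cancel₀ hnu.ne' ?_
    rw [sin_sub]
    linear_combination sin φ * hcos + cos φ * hsin - ‖u‖ * w 1 * sin_sq_add_cos_sq φ

lemma HasPolarAngle.norm_sum_mul_cos_sin_angle {ι : Type*} {s : Finset ι} {u : Pt} {w : ι → Pt}
    {φ : ℝ} {a : ι → ℝ} (hu : HasPolarAngle u φ) (hu0 : u ≠ 0)
    (hw : ∀ i ∈ s, HasPolarAngle (w i) (φ - a i)) (hS : 0 ≤ ∑ i ∈ s, ‖w i‖ * sin (a i)) :
    ‖∑ i ∈ s, w i‖ * cos (InnerProductGeometry.angle u (∑ i ∈ s, w i)) =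
        ∑ i ∈ s, ‖w i‖ * cos (a i) ∧
      ‖∑ i ∈ s, w i‖ * sin (InnerProductGeometry.angle u (∑ i ∈ s, w i)) =
        ∑ i ∈ s, ‖w i‖ * sin (a i) := by
  have hnu : 0 < ‖u‖ := norm_pos_iff.2 hu0
  have hinner : inner ℝ u (∑ i ∈ s, w i) = ‖u‖ * ∑ i ∈ s, ‖w i‖ * cos (a i) := by
    rw [inner_sum, mul_sum]
    exact sum_congr rfl fun i hi ↦ hu.inner_eq (hw i hi)
  have hcr : |cr u (∑ i ∈ s, w i)| = ‖u‖ * ∑ i ∈ s, ‖w i‖ * sin (a i) := by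
    rw [cr_sum_right, sum_congr rfl fun i hi ↦ hu.cr_eq (hw i hi), sum_neg_distrib, ← mul_sum,
      abs_neg, abs_of_nonneg (mul_nonneg hnu.le hS)]
  constructor
  · refine mul_left_cancel₀ hnu.ne' ?_
    rw [← hinner, ← InnerProductGeometry.cos_angle_mul_norm_mul_norm]; ring
  · refine mul_left_cancel₀ hnu.ne' ?_
    rw [← hcr, abs_cr_eq_sin_angle_mul]; ring

lemma beta_eq_angle (a b c : Pt) : beta a b c = InnerProductGeometry.angle (b - a) (c - b) := by
  rw [beta, EuclideanGeometry.angle, vsub_eq_sub, vsub_eq_sub, ← neg_sub b a,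
    InnerProductGeometry.angle_neg_left]
  ring

lemma beta_nonneg (a b c : Pt) : 0 ≤ beta a b c :=
  sub_nonneg.2 (EuclideanGeometry.angle_le_pi a b c)

def turn (v : ℕ → Pt) (m : ℕ) : ℝ := ∑ k ∈ Icc 2 m, beta (v (k - 1)) (v k) (v (k + 1))

section turn

variable (v : ℕ → Pt)

lemma turn_one : turn v 1 = 0 := by
  simp [turn]

lemma turn_succ {k : ℕ} (hk : 1 ≤ k) :
    turn v (k + 1) = turn v k + beta (v k) (v (k + 1)) (v (k + 2)) := by
  rw [turn, sum_Icc_succ_top (by omega), Nat.add_sub_cancel]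
  rfl

lemma turn_nonneg (m : ℕ) : 0 ≤ turn v m :=
  sum_nonneg fun _ _ ↦ beta_nonneg _ _ _

lemma turn_mono {k m : ℕ} (hkm : k ≤ m) : turn v k ≤ turn v m :=
  sum_le_sum_of_subset_of_nonneg (Icc_subset_Icc_right hkm) fun _ _ _ ↦ beta_nonneg _ _ _

lemma beta_le_turn {k : ℕ} (hk : 2 ≤ k) : beta (v (k - 1)) (v k) (v (k + 1)) ≤ turn v k :=
  single_le_sum (f := fun j ↦ beta (v (j - 1)) (v j) (v (j + 1)))
    (fun _ _ ↦ beta_nonneg _ _ _) (mem_Icc.2 ⟨hk, le_rfl⟩)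

end turn

namespace Proper

variable {n : ℕ} {v : ℕ → Pt} {θ : ℝ}

lemma cr_edge_neg (hv : Proper n v) {j : ℕ} (hj : 1 ≤ j) (hjn : j + 2 ≤ n) :
    cr (v (j + 1) - v j) (v (j + 2) - v (j + 1)) < 0 := by
  induction j, hj using Nat.le_induction with
  | base =>
    have h := hv.1
    simp only [cr, tdet, PiLp.sub_apply] at h ⊢
    linarith
  | succ j hj ih =>
    -- `v j` and `v (j + 3)` lie on the same side of the supporting line of the edge `j + 1`
    obtain ⟨ℓ, c, hℓ₁, hℓ₂, hℓ⟩ := hv.2 (j + 1) (by omega) (by omega)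
    rw [cyc, if_neg (by omega)] at hℓ₂ hℓ
    have hcy : cr (v (j + 2) - v (j + 1)) (v j - v (j + 1)) < 0 := by
      convert ih (by omega) using 1
      simp only [cr, PiLp.sub_apply]; ring
    convert cr_neg_of_same_side ℓ (y := v j - v (j + 1)) (z := v (j + 3) - v (j + 1))
      (by rw [map_sub, hℓ₁, hℓ₂, sub_self])
      (by rw [map_sub, hℓ₁, sub_neg]; exact hℓ j (by omega) (by omega) (by omega) (by omega))
      (by rw [map_sub, hℓ₁, sub_neg]; exact hℓ (j + 3) (by omega) (by omega) (by omega) (by omega))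
      hcy using 1
    simp only [cr, PiLp.sub_apply]; ring

lemma edge_ne_zero (hv : Proper n v) (hn : 3 ≤ n) {j : ℕ} (hj : 1 ≤ j) (hjn : j + 1 ≤ n) :
    v (j + 1) - v j ≠ 0 := by
  intro h0
  rcases Nat.lt_or_ge (j + 1) n with hjn' | hjn'
  · have h := hv.cr_edge_neg hj hjn'
    rw [h0, cr_zero_left] at h
    exact h.false
  · obtain ⟨i, rfl⟩ : ∃ i, j = i + 1 := ⟨j - 1, by omega⟩
    have h := hv.cr_edge_neg (j := i) (by omega) (by omega)
    rw [h0, cr_zero_right] at h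
    exact h.false

lemma hasPolarAngle_edge (hv : Proper n v) (hn : 3 ≤ n) {φ : ℝ}
    (hφ : HasPolarAngle (v 2 - v 1) φ) {k : ℕ} (hk : 1 ≤ k) (hkn : k + 1 ≤ n) :
    HasPolarAngle (v (k + 1) - v k) (φ - turn v k) := by
  induction k, hk using Nat.le_induction with
  | base => rwa [turn_one, sub_zero]
  | succ k hk ih =>
    rw [turn_succ v hk, beta_eq_angle, ← sub_sub]
    exact (ih (by omega)).sub_angle (hv.edge_ne_zero hn hk (by omega))
      (hv.cr_edge_neg hk hkn).le

theorem chord_cos_sin (hv : Proper n v) (hn : 3 ≤ n) (hturn : turn v (n - 1) ≤ π) :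
    dist (v 2) (v n) * cos (beta (v 1) (v 2) (v n)) =
        ∑ k ∈ Icc 2 (n - 1), dist (v k) (v (k + 1)) * cos (turn v k) ∧
      dist (v 2) (v n) * sin (beta (v 1) (v 2) (v n)) =
        ∑ k ∈ Icc 2 (n - 1), dist (v k) (v (k + 1)) * sin (turn v k) := by
  obtain ⟨φ, hφ⟩ := exists_hasPolarAngle (v 2 - v 1)
  have hchord : v n - v 2 = ∑ k ∈ Icc 2 (n - 1), (v (k + 1) - v k) := by
    rw [← Ico_add_one_right_eq_Icc, Nat.sub_add_cancel (by omega), sum_Ico_sub _ (by omega)]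
  simp only [dist_eq_norm', beta_eq_angle, hchord]
  refine hφ.norm_sum_mul_cos_sin_angle (hv.edge_ne_zero hn le_rfl (by omega))
    (fun k hk ↦ hv.hasPolarAngle_edge hn hφ (by simp at hk; omega) (by simp at hk; omega))
    (sum_nonneg fun k hk ↦ mul_nonneg (norm_nonneg _) (sin_nonneg_of_nonneg_of_le_pi
      (turn_nonneg v k) ((turn_mono v (mem_Icc.1 hk).2).trans hturn)))

theorem sin_div_mul_sum_le (hv : Proper n v) (hn : 3 ≤ n) (hthin : Thin n v θ)
    (hθ : θ ≤ π / 2) :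
    sin θ / θ * ∑ k ∈ Icc 2 (n - 1),
        dist (v k) (v (k + 1)) * beta (v (k - 1)) (v k) (v (k + 1)) ≤
      beta (v 1) (v 2) (v n) * dist (v 2) (v n) := by
  have hturn (k : ℕ) (hk : k ≤ n - 1) : turn v k ≤ θ := (turn_mono v hk).trans hthin
  obtain ⟨-, hsin⟩ := hv.chord_cos_sin hn (by linarith [hturn (n - 1) le_rfl, pi_pos])
  calc sin θ / θ * ∑ k ∈ Icc 2 (n - 1),
        dist (v k) (v (k + 1)) * beta (v (k - 1)) (v k) (v (k + 1))
      ≤ ∑ k ∈ Icc 2 (n - 1), dist (v k) (v (k + 1)) * sin (turn v k) := by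
        rw [mul_sum]
        refine sum_le_sum fun k hk ↦ ?_
        have hk := mem_Icc.1 hk
        have hβ := beta_le_turn v hk.1
        have hβ₀ := beta_nonneg (v (k - 1)) (v k) (v (k + 1))
        calc sin θ / θ * (dist (v k) (v (k + 1)) * beta (v (k - 1)) (v k) (v (k + 1)))
            = dist (v k) (v (k + 1)) * (sin θ / θ * beta (v (k - 1)) (v k) (v (k + 1))) := by
              ring
          _ ≤ dist (v k) (v (k + 1)) * sin (turn v k) := by
              gcongr
              exact (sin_div_mul_le_sin hβ₀ (hβ.trans (hturn k hk.2)) (by linarith [pi_pos])).trans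
                (sin_le_sin_of_le_of_le_pi_div_two (by linarith [pi_pos])
                  ((hturn k hk.2).trans hθ) hβ)
    _ = dist (v 2) (v n) * sin (beta (v 1) (v 2) (v n)) := hsin.symm
    _ ≤ beta (v 1) (v 2) (v n) * dist (v 2) (v n) := by
        rw [mul_comm]
        gcongr
        exact sin_le (beta_nonneg _ _ _)

theorem beta_mul_dist_le_sum (hv : Proper n v) (hn : 3 ≤ n) (hthin : Thin n v θ)
    (hθ : θ < π / 2) :
    beta (v 1) (v 2) (v n) * dist (v 2) (v n) ≤
      ∑ k ∈ Icc 2 (n - 1), dist (v k) (v (k + 1)) * turn v k := by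
  have hturn (k : ℕ) (hk : k ≤ n - 1) : turn v k < π / 2 :=
    ((turn_mono v hk).trans hthin).trans_lt hθ
  have hturn₀ (k : ℕ) : -(π / 2) < turn v k := by linarith [turn_nonneg v k, pi_pos]
  have hedge (k : ℕ) (hk : k ∈ Icc 2 (n - 1)) : 0 < dist (v k) (v (k + 1)) := by
    rw [dist_pos, ne_comm, ← sub_ne_zero]
    exact hv.edge_ne_zero hn (by simp at hk; omega) (by simp at hk; omega)
  have hIcc : (Icc 2 (n - 1)).Nonempty := nonempty_Icc.2 (by omega)
  obtain ⟨hcos, hsin⟩ := hv.chord_cos_sin hn (by linarith [hturn (n - 1) le_rfl, pi_pos])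
  have hC : 0 < dist (v 2) (v n) * cos (beta (v 1) (v 2) (v n)) := by
    rw [hcos]
    exact sum_pos (fun k hk ↦ mul_pos (hedge k hk)
      (cos_pos_of_mem_Ioo ⟨hturn₀ k, hturn k (mem_Icc.1 hk).2⟩)) hIcc
  have hchord : 0 < dist (v 2) (v n) :=
    dist_nonneg.lt_of_ne fun h ↦ by rw [← h, zero_mul] at hC; exact hC.false
  have hβ : beta (v 1) (v 2) (v n) < π / 2 := by
    by_contra! h
    have hπ : beta (v 1) (v 2) (v n) ≤ π := sub_le_self _ (EuclideanGeometry.angle_nonneg _ _ _)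
    have := cos_nonpos_of_pi_div_two_le_of_le h (by linarith [pi_pos])
    nlinarith
  calc beta (v 1) (v 2) (v n) * dist (v 2) (v n)
      = arcLength (dist (v 2) (v n) * cos (beta (v 1) (v 2) (v n)))
          (dist (v 2) (v n) * sin (beta (v 1) (v 2) (v n))) := by
        rw [arcLength_mul_cos_mul_sin hchord (by linarith [beta_nonneg (v 1) (v 2) (v n), pi_pos])
          hβ, mul_comm]
    _ ≤ ∑ k ∈ Icc 2 (n - 1),
          arcLength (dist (v k) (v (k + 1)) * cos (turn v k))
            (dist (v k) (v (k + 1)) * sin (turn v k)) := by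
        rw [hcos, hsin]
        refine arcLength_sum_le hIcc (fun k hk ↦ mul_pos (hedge k hk)
          (cos_pos_of_mem_Ioo ⟨hturn₀ k, hturn k (mem_Icc.1 hk).2⟩)) fun k hk ↦
            mul_nonneg dist_nonneg (sin_nonneg_of_nonneg_of_le_pi (turn_nonneg v k)
              (by linarith [hturn k (mem_Icc.1 hk).2, pi_pos]))
    _ = ∑ k ∈ Icc 2 (n - 1), dist (v k) (v (k + 1)) * turn v k :=
        sum_congr rfl fun k hk ↦
          arcLength_mul_cos_mul_sin (hedge k hk) (hturn₀ k) (hturn k (mem_Icc.1 hk).2)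

end Proper

/-- Bounds for `β(v₁, v₂, v_n)·d(v₂, v_n)` in terms of the edge-by-angle sums
`γ_k = d(v_k, v_{k+1})·β_k` of a proper `θ`-thin sequence (`θ < 0.5`) whose
edge sequence is `h`-decreasing (`h > 4`). -/
theorem stmt12 (n : ℕ) (hn : 3 ≤ n) (θ h : ℝ) (hθ : θ < 0.5) (hh : 4 < h)
    (v : ℕ → Pt) (hv : Proper n v) (hthin : Thin n v θ) (hedge : EdgeDecr n v h) :
    (Real.sin θ / θ) ^ n *
        ∑ k ∈ Finset.Icc 2 (n - 1),
          dist (v k) (v (k + 1)) * beta (v (k - 1)) (v k) (v (k + 1)) ≤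
      beta (v 1) (v 2) (v n) * dist (v 2) (v n) ∧
    beta (v 1) (v 2) (v n) * dist (v 2) (v n) ≤
      (h / (h - 1)) ^ n *
        ∑ k ∈ Finset.Icc 2 (n - 1),
          dist (v k) (v (k + 1)) * beta (v (k - 1)) (v k) (v (k + 1)) := by
  have hθπ : θ < π / 2 := by linarith [pi_gt_three]
  have hθ₀ : 0 ≤ θ := (turn_nonneg v (n - 1)).trans hthin
  have hγ : 0 ≤ ∑ k ∈ Icc 2 (n - 1),
      dist (v k) (v (k + 1)) * beta (v (k - 1)) (v k) (v (k + 1)) :=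
    sum_nonneg fun k _ ↦ mul_nonneg dist_nonneg (beta_nonneg _ _ _)
  constructor
  · calc _ ≤ sin θ / θ * ∑ k ∈ Icc 2 (n - 1),
            dist (v k) (v (k + 1)) * beta (v (k - 1)) (v k) (v (k + 1)) := by
          gcongr
          exact pow_le_of_le_one (div_nonneg (sin_nonneg_of_nonneg_of_le_pi hθ₀ (by linarith))
            hθ₀) (div_le_one_of_le₀ (sin_le hθ₀) hθ₀) (by omega)
      _ ≤ _ := hv.sin_div_mul_sum_le hn hthin hθπ.le
  · calc _ ≤ ∑ k ∈ Icc 2 (n - 1), dist (v k) (v (k + 1)) * turn v k :=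
          hv.beta_mul_dist_le_sum hn hthin hθπ
      _ ≤ h / (h - 1) * ∑ k ∈ Icc 2 (n - 1),
            dist (v k) (v (k + 1)) * beta (v (k - 1)) (v k) (v (k + 1)) :=
          sum_mul_sum_Icc_le (by linarith) (fun _ ↦ beta_nonneg _ _ _) dist_nonneg
            fun k hk _ ↦ hedge k (by omega) (by omega)
      _ ≤ _ := by
          gcongr
          exact le_self_pow₀ ((one_le_div (by linarith)).2 (by linarith)) (by omega)
end
end
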